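/- arXiv:1511.04482 — 4 statements merged into one kernel-verified Lean document; each statement's English description precedes it below -/
import Mathlib

section
/- Let c_1, …, c_n be coins with types (a_i, b_i, x_i) satisfying a_i ≤ b_i and x_i ≥ 1 for all i. If i_1 → i_2 → … → i_k → i_1 is a directed cycle in the dominance graph of these coins, then b_{i_1} = b_{i_2} = … = b_{i_k}. -/
open Finset

/-- The probability that coin `(a,b,x)` displays a strictly larger number than
coin `(a',b',x')`, when both are flipped independently. -/
noncomputable def winProb (a b x a' b' x' : ℝ) : ℝ :=
  (1 / (1 + x)) * (1 / (1 + x')) * (if a' < a then 1 else 0)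
  + (1 / (1 + x)) * (x' / (1 + x')) * (if b' < a then 1 else 0)
  + (x / (1 + x)) * (1 / (1 + x')) * (if a' < b then 1 else 0)
  + (x / (1 + x)) * (x' / (1 + x')) * (if b' < b then 1 else 0)

/-- Coin `(a,b,x)` dominates coin `(a',b',x')`: it is more likely to display the
strictly larger number. -/
def Dominates (a b x a' b' x' : ℝ) : Prop :=
  winProb a' b' x' a b x < winProb a b x a' b' x'

/-- A tournament: irreflexive, and for distinct vertices exactly one of the two
directed edges is present. -/
def IsTournament {V : Type*} (R : V → V → Prop) : Prop :=
  (∀ v, ¬ R v v) ∧ ∀ u v : V, u ≠ v → (R u v ↔ ¬ R v u)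

/-- A directed cycle `c 0 → c 1 → ⋯ → c (m-1) → c 0` in the digraph `R`:
the vertices are distinct and consecutive ones (cyclically) are joined by edges. -/
def IsCycle {V : Type*} (R : V → V → Prop) {m : ℕ} (c : Fin (m + 1) → V) : Prop :=
  Function.Injective c ∧ ∀ i : Fin (m + 1), R (c i) (c (i + 1))

/-- A cycle on linearly ordered vertices is ascending if it has at least as many
ascents as descents. -/
def IsAscendingCycle {α : Type*} [LinearOrder α] {m : ℕ} (c : Fin (m + 1) → α) : Prop :=
  (univ.filter (fun i : Fin (m + 1) => c (i + 1) < c i)).card ≤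
    (univ.filter (fun i : Fin (m + 1) => c i < c (i + 1))).card

/-- A digraph on a linearly ordered vertex set is semiacyclic if it contains no
ascending directed cycle. -/
def Semiacyclic {α : Type*} [LinearOrder α] (R : α → α → Prop) : Prop :=
  ∀ (m : ℕ) (c : Fin (m + 1) → α), IsCycle R c → ¬ IsAscendingCycle c

/-- Lexicographic order on coin types. -/
def TypeLt (a b x a' b' x' : ℝ) : Prop :=
  a < a' ∨ (a = a' ∧ b < b') ∨ (a = a' ∧ b = b' ∧ x < x')

/-- The 3-cycle tournament on `{0,1,2}` with `0 → 1`, `1 → 2`, `2 → 0`. -/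
def C3 (u v : Fin 3) : Prop := v = u + 1

/-- The direct product of two tournaments. -/
def TournProd {V₁ V₂ : Type*} (R₁ : V₁ → V₁ → Prop) (R₂ : V₂ → V₂ → Prop)
    (u v : V₁ × V₂) : Prop :=
  R₁ u.1 v.1 ∨ (u.1 = v.1 ∧ R₂ u.2 v.2)

/-!
Suppose `a ≤ b < b'`. Then `(a', b', x')` beats `(a, b, x)` whenever it shows `b'`, which has
probability `x'/(1+x')`, while `(a, b, x)` can beat `(a', b', x')` only when the latter shows `a'`,
which has probability `1/(1+x')`. For `x' ≥ 1` the first probability is at least the second, so a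
coin can only dominate coins whose larger side is at most its own. Along a directed cycle the
larger sides thus decrease weakly all the way round, hence are all equal.
-/

section WinProb

variable {a b x a' b' x' : ℝ}

lemma winProb_le_of_lt (hab : a ≤ b) (hbb' : b < b') (hx : 0 ≤ x) (hx' : 0 ≤ x') :
    winProb a b x a' b' x' ≤ 1 / (1 + x') := by
  have hb'a : ¬ b' < a := by linarith
  have hb'b : ¬ b' < b := by linarith
  have hsum : 1 / (1 + x) + x / (1 + x) = 1 := by field_simp
  calc winProb a b x a' b' x'
      = 1 / (1 + x) * (1 / (1 + x')) * (if a' < a then 1 else 0)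
        + x / (1 + x) * (1 / (1 + x')) * (if a' < b then 1 else 0) := by
        simp only [winProb, if_neg hb'a, if_neg hb'b]; ring
    _ ≤ 1 / (1 + x) * (1 / (1 + x')) + x / (1 + x) * (1 / (1 + x')) := by
        have hind (P : Prop) [Decidable P] : (if P then (1 : ℝ) else 0) ≤ 1 :=
          ite_le_one le_rfl zero_le_one
        exact add_le_add (mul_le_of_le_one_right (by positivity) (hind _))
          (mul_le_of_le_one_right (by positivity) (hind _))
    _ = 1 / (1 + x') := by rw [← add_mul, hsum, one_mul]

lemma le_winProb_of_lt (hab : a ≤ b) (hbb' : b < b') (hx : 0 ≤ x) (hx' : 0 ≤ x') :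
    x' / (1 + x') ≤ winProb a' b' x' a b x := by
  have hab' : a < b' := by linarith
  have hsum : 1 / (1 + x) + x / (1 + x) = 1 := by field_simp
  have hrest : 0 ≤ 1 / (1 + x') * (1 / (1 + x)) * (if a < a' then 1 else 0)
      + 1 / (1 + x') * (x / (1 + x)) * (if b < a' then 1 else 0) := by
    positivity
  calc x' / (1 + x') = x' / (1 + x') * (1 / (1 + x)) + x' / (1 + x') * (x / (1 + x)) := by
        rw [← mul_add, hsum, mul_one]
    _ ≤ winProb a' b' x' a b x := by
        simp only [winProb, if_pos hab', if_pos hbb']; linarith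

lemma Dominates.le_of_one_le (hd : Dominates a b x a' b' x') (hab : a ≤ b) (hx : 0 ≤ x)
    (hx' : 1 ≤ x') : b' ≤ b := by
  by_contra! hbb'
  have hx'₀ : 0 ≤ x' := zero_le_one.trans hx'
  refine (show winProb a' b' x' a b x < winProb a b x a' b' x' from hd).not_ge ?_
  calc winProb a b x a' b' x' ≤ 1 / (1 + x') := winProb_le_of_lt hab hbb' hx hx'₀
    _ ≤ x' / (1 + x') := by gcongr
    _ ≤ winProb a' b' x' a b x := le_winProb_of_lt hab hbb' hx hx'₀

end WinProb

open Fin.NatCast in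
lemma Fin.apply_le_of_forall_apply_add_one_le {α : Type*} [Preorder α] {k : ℕ}
    {f : Fin (k + 1) → α} (hf : ∀ i, f (i + 1) ≤ f i) (p q : Fin (k + 1)) : f q ≤ f p := by
  have hstep : ∀ j : ℕ, f (p + j) ≤ f p := by
    intro j
    induction j with
    | zero => simp
    | succ j ih =>
      calc f (p + ((j + 1 : ℕ) : Fin (k + 1))) = f (p + j + 1) := by rw [Nat.cast_succ, add_assoc]
        _ ≤ f p := (hf _).trans ih
  simpa using hstep (q - p).val

/-- In a system of winner and fair coins, all coins on a directed cycle of the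
dominance graph have the same larger side. -/
theorem stmt5 {n : ℕ} (a b x : Fin n → ℝ)
    (hcoin : ∀ i, a i ≤ b i ∧ 1 ≤ x i)
    {k : ℕ} (c : Fin (k + 1) → Fin n)
    (hcyc : IsCycle
      (fun i j : Fin n => Dominates (a i) (b i) (x i) (a j) (b j) (x j)) c) :
    ∀ p q : Fin (k + 1), b (c p) = b (c q) := by
  have hstep (i : Fin (k + 1)) : b (c (i + 1)) ≤ b (c i) :=
    (hcyc.2 i).le_of_one_le (hcoin (c i)).1 (zero_le_one.trans (hcoin (c i)).2) (hcoin (c (i + 1))).2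
  intro p q
  exact le_antisymm (Fin.apply_le_of_forall_apply_add_one_le (f := fun i => b (c i)) hstep q p)
    (Fin.apply_le_of_forall_apply_add_one_le (f := fun i => b (c i)) hstep p q)
end

section
/- Let c_1, …, c_n be coins with types (a_i, b_i, x_i) satisfying a_i ≤ b_i and x_i ≥ 1 for all i (i.e., the set contains no loser coins), and suppose their dominance graph is a tournament T on {1,…,n}. Then T is also the dominance graph of a set of n winner coins that all have the same number on one of their sides; that is, there exist coins c'_1, …, c'_n with types (a'_i, b'_i, x'_i) satisfying a'_i < b'_i, x'_i > 1, and b'_1 = b'_2 = … = b'_n, whose dominance graph is exactly T. -/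
open Finset

/-!
Clearing denominators, `(a,b,x)` dominates `(a',b',x')` iff its advantage
`sign (a - a') + x' sign (a - b') + x sign (b - a') + x x' sign (b - b')` is positive.
Without loser coins, a coin only dominates coins below it in the lexicographic order on
`(b, [a = b])`, and coins with the same top when both are non-constant, where the advantage is
`x - x' + sign (a - a')`. Keeping the bottoms, raising all tops to a common `B`, and adding to
`x` a multiple of the rank of `(b, [a = b])` large enough to outweigh all the original `x`
preserves every edge; as the old graph is a tournament and dominance is asymmetric, no edge
appears.
-/

noncomputable def advantage (a b x a' b' x' : ℝ) : ℝ :=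
  Real.sign (a - a') + x' * Real.sign (a - b') + x * Real.sign (b - a')
    + x * x' * Real.sign (b - b')

lemma ite_lt_sub_ite_lt (u v : ℝ) :
    ((if v < u then 1 else 0) - if u < v then 1 else 0) = Real.sign (u - v) := by
  rcases lt_trichotomy u v with h | rfl | h
  · simp [h, h.not_gt, Real.sign_of_neg (sub_neg.2 h)]
  · simp
  · simp [h, h.not_gt, Real.sign_of_pos (sub_pos.2 h)]

lemma winProb_sub_winProb (a b x a' b' x' : ℝ) :
    winProb a b x a' b' x' - winProb a' b' x' a b x
      = advantage a b x a' b' x' / ((1 + x) * (1 + x')) := by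
  rw [div_mul_eq_div_div]
  unfold winProb advantage
  linear_combination (1 / (1 + x) * (1 / (1 + x'))) * ite_lt_sub_ite_lt a a'
    + (1 / (1 + x) * (x' / (1 + x'))) * ite_lt_sub_ite_lt a b'
    + (x / (1 + x) * (1 / (1 + x'))) * ite_lt_sub_ite_lt b a'
    + (x / (1 + x) * (x' / (1 + x'))) * ite_lt_sub_ite_lt b b'

lemma dominates_iff_advantage_pos {a b x a' b' x' : ℝ} (hx : 0 ≤ x) (hx' : 0 ≤ x') :
    Dominates a b x a' b' x' ↔ 0 < advantage a b x a' b' x' := by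
  rw [Dominates, ← sub_pos, winProb_sub_winProb, div_pos_iff_of_pos_right (by positivity)]

lemma Dominates.not_dominates {a b x a' b' x' : ℝ} (h : Dominates a b x a' b' x') :
    ¬ Dominates a' b' x' a b x :=
  lt_asymm h

lemma Real.abs_sign_le_one (r : ℝ) : |Real.sign r| ≤ 1 := by
  rcases Real.sign_apply_eq r with h | h | h <;> simp [h]

lemma advantage_of_top_eq {a a' b : ℝ} (x x' : ℝ) (ha : a < b) (ha' : a' < b) :
    advantage a b x a' b x' = x - x' + Real.sign (a - a') := by
  simp only [advantage, Real.sign_of_neg (sub_neg.2 ha), Real.sign_of_pos (sub_pos.2 ha'),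
    sub_self, Real.sign_zero]
  ring

lemma advantage_nonpos_of_top_lt {a b x a' b' x' : ℝ} (ha : a ≤ b) (hx : 0 ≤ x) (hx' : 1 ≤ x')
    (hb : b < b') : advantage a b x a' b' x' ≤ 0 := by
  have hsign_a := (abs_le.1 (Real.abs_sign_le_one (a - a'))).2
  have hsign_b := (abs_le.1 (Real.abs_sign_le_one (b - a'))).2
  rw [advantage, Real.sign_of_neg (sub_neg.2 (ha.trans_lt hb)),
    Real.sign_of_neg (sub_neg.2 hb)]
  nlinarith [mul_le_mul_of_nonneg_left hsign_b hx]

/-- A constant coin `(b,b,x)` beats every non-constant coin with top `b`, so it sits above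
them. -/
noncomputable def coinKey (a b : ℝ) : ℝ ×ₗ Bool := toLex (b, decide (a = b))

lemma coinKey_lt_or_of_advantage_pos {a b x a' b' x' : ℝ} (ha : a ≤ b) (ha' : a' ≤ b')
    (hx : 0 ≤ x) (hx' : 1 ≤ x') (h : 0 < advantage a b x a' b' x') :
    coinKey a' b' < coinKey a b ∨ (b' = b ∧ a < b ∧ a' < b') := by
  rcases lt_trichotomy b b' with hb | rfl | hb
  · exact absurd h (advantage_nonpos_of_top_lt ha hx hx' hb).not_gt
  · rcases ha.lt_or_eq with ha | rfl <;> rcases ha'.lt_or_eq with ha' | rfl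
    · exact Or.inr ⟨rfl, ha, ha'⟩
    · rw [advantage, Real.sign_of_neg (sub_neg.2 ha)] at h
      simp only [sub_self, Real.sign_zero] at h
      linarith
    · exact Or.inl (Prod.Lex.toLex_lt_toLex.2 (Or.inr ⟨rfl, by simp [ha'.ne]⟩))
    · simp [advantage] at h
  · exact Or.inl (Prod.Lex.toLex_lt_toLex.2 (Or.inl hb))

lemma Dominates.shift_to_common_top {a b x a' b' x' B s s' : ℝ} (ha : a ≤ b) (ha' : a' ≤ b')
    (hx : 1 ≤ x) (hx' : 1 ≤ x') (hb : b < B) (hb' : b' < B) (hs : 0 ≤ s) (hs' : 0 ≤ s')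
    (hlt : coinKey a' b' < coinKey a b → x' < s - s')
    (heq : coinKey a' b' = coinKey a b → s = s')
    (h : Dominates a b x a' b' x') : Dominates a B (x + s) a' B (x' + s') := by
  rw [dominates_iff_advantage_pos (by linarith) (by linarith)] at h ⊢
  rw [advantage_of_top_eq _ _ (ha.trans_lt hb) (ha'.trans_lt hb')]
  rcases coinKey_lt_or_of_advantage_pos ha ha' (by linarith) hx' h with hkey | ⟨rfl, ha, ha'⟩
  · have hsign := (abs_le.1 (Real.abs_sign_le_one (a - a'))).1
    linarith [hlt hkey]
  · have hkey : coinKey a' b' = coinKey a b' := by simp [coinKey, ha.ne, ha'.ne]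
    rw [advantage_of_top_eq _ _ ha ha'] at h
    linarith [heq hkey]

section Rank

variable {ι α : Type*} [Fintype ι] [Preorder α] [DecidableLT α]

def rank (f : ι → α) (i : ι) : ℕ := #{k | f k < f i}

lemma rank_lt_rank {f : ι → α} {i j : ι} (h : f i < f j) : rank f i < rank f j := by
  refine card_lt_card ⟨fun k hk => ?_, fun hsub => ?_⟩
  · simp only [mem_filter, mem_univ, true_and] at hk ⊢
    exact hk.trans h
  · simpa using hsub (by simpa using h : i ∈ ({k | f k < f j} : Finset ι))

end Rank

lemma Finite.exists_forall_lt {ι : Sort*} {α : Type*} [Finite ι] [Preorder α] [Nonempty α]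
    [IsDirectedOrder α] [NoMaxOrder α] (f : ι → α) : ∃ M, ∀ i, f i < M := by
  obtain ⟨M, hM⟩ := Finite.exists_le f
  obtain ⟨M', hM'⟩ := exists_gt M
  exact ⟨M', fun i => (hM i).trans_lt hM'⟩

lemma IsTournament.iff_of_forall_imp_of_asymm {V : Type*} {R S : V → V → Prop}
    (hR : IsTournament R) (hRS : ∀ u v, R u v → S u v) (hS : ∀ u v, S u v → ¬ S v u)
    (u v : V) : S u v ↔ R u v := by
  refine ⟨fun h => ?_, hRS u v⟩
  by_contra hn
  have huv : u ≠ v := by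
    rintro rfl
    exact hS u u h h
  exact hS u v h (hRS v u ((hR.2 v u huv.symm).2 hn))

/-- If a set of coins contains no loser coins and its dominance graph is a
tournament, then this tournament is also the dominance graph of a set of winner
coins that all have the same number on one of their sides. -/
theorem stmt8 {n : ℕ} (a b x : Fin n → ℝ)
    (hcoin : ∀ i, a i ≤ b i ∧ 1 ≤ x i)
    (htour : IsTournament
      (fun i j : Fin n => Dominates (a i) (b i) (x i) (a j) (b j) (x j))) :
    ∃ a' b' x' : Fin n → ℝ,
      (∀ i, a' i < b' i ∧ 1 < x' i) ∧
      (∀ i j : Fin n, b' i = b' j) ∧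
      ∀ i j : Fin n,
        (Dominates (a' i) (b' i) (x' i) (a' j) (b' j) (x' j) ↔
          Dominates (a i) (b i) (x i) (a j) (b j) (x j)) := by
  classical
  obtain ⟨B, hB⟩ := Finite.exists_forall_lt b
  obtain ⟨K, hK⟩ := Finite.exists_forall_lt x
  have hK_pos : ∀ i, 0 < K := fun i => by linarith [hK i, (hcoin i).2]
  set key : Fin n → ℝ ×ₗ Bool := fun i => coinKey (a i) (b i)
  set s : Fin n → ℝ := fun i => K * (rank key i + 1)
  have hs : ∀ i, 0 < s i := fun i => mul_pos (hK_pos i) (by positivity)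
  have hlt : ∀ i j, key j < key i → x j < s i - s j := fun i j hkey => by
    have hr : (rank key j : ℝ) + 1 ≤ rank key i := by exact_mod_cast rank_lt_rank hkey
    nlinarith [hK j, hK_pos i]
  have hmono : ∀ i j, Dominates (a i) (b i) (x i) (a j) (b j) (x j) →
      Dominates (a i) B (x i + s i) (a j) B (x j + s j) := fun i j =>
    Dominates.shift_to_common_top (hcoin i).1 (hcoin j).1 (hcoin i).2 (hcoin j).2 (hB i) (hB j)
      (hs i).le (hs j).le (hlt i j) fun hkey => by
        simp only [s, rank, show key j = key i from hkey]
  exact ⟨a, fun _ => B, fun i => x i + s i,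
    fun i => ⟨(hcoin i).1.trans_lt (hB i), by linarith [(hcoin i).2, hs i]⟩, fun _ _ => rfl,
    htour.iff_of_forall_imp_of_asymm hmono fun _ _ h => h.not_dominates⟩
end

section
/- Let c_1, …, c_n be coins with types (a_i, b_i, x_i) satisfying a_i < b_i and 0 < x_i ≤ 1 for all i (i.e., only loser and fair coins), listed so that the types are in strictly increasing lexicographic order. If the dominance graph of these coins is a tournament on {1, …, n}, then this tournament is semiacyclic. -/
open Finset

/-- `winProb a b x a' b' x'` multiplied by `(1 + x) * (1 + x')`. -/
noncomputable def winWeight (a b x a' b' x' : ℝ) : ℝ :=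
  (if a' < a then 1 else 0) + x' * (if b' < a then 1 else 0)
    + x * (if a' < b then 1 else 0) + x * x' * (if b' < b then 1 else 0)

section Coins

variable {a b x a' b' x' : ℝ}

lemma winProb_eq_winWeight_div (hx : 0 < x) (hx' : 0 < x') :
    winProb a b x a' b' x' = winWeight a b x a' b' x' / ((1 + x) * (1 + x')) := by
  unfold winProb winWeight
  field_simp

lemma dominates_iff_winWeight_lt (hx : 0 < x) (hx' : 0 < x') :
    Dominates a b x a' b' x' ↔ winWeight a' b' x' a b x < winWeight a b x a' b' x' := by
  rw [Dominates, winProb_eq_winWeight_div hx hx', winProb_eq_winWeight_div hx' hx,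
    mul_comm (1 + x')]
  exact div_lt_div_iff_of_pos_right (by positivity)

lemma not_dominates_self : ¬ Dominates a b x a b x :=
  lt_irrefl _

/-- The first coin can only win by showing `b`, which it does with probability
`x / (1 + x) ≤ 1 / 2`, and it loses whenever it shows `a`. -/
lemma not_dominates_of_lt_of_le_one (hx : 0 < x) (hx1 : x ≤ 1) (hx' : 0 < x') (hab' : a' ≤ b')
    (haa' : a < a') : ¬ Dominates a b x a' b' x' := by
  rw [dominates_iff_winWeight_lt hx hx', not_lt, winWeight, winWeight,
    if_neg haa'.not_gt, if_neg (haa'.trans_le hab').not_gt, if_pos haa',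
    if_pos (haa'.trans_le hab')]
  have : x * (1 + x') ≤ 1 + x' := by nlinarith
  split_ifs <;> nlinarith

lemma one_div_add_one_lt_of_dominates_of_lt (hx : 0 < x) (hx' : 0 < x') (hab : a < b)
    (hbb' : b < b') (hd : Dominates a b x a b' x') : 1 / x + 1 < 1 / x' := by
  rw [dominates_iff_winWeight_lt hx hx', winWeight, winWeight, if_neg (lt_irrefl a),
    if_neg (hab.trans hbb').not_gt, if_neg hab.not_gt, if_pos hab, if_pos (hab.trans hbb'),
    if_neg hbb'.not_gt, if_pos hbb'] at hd
  rw [div_add_one hx.ne', div_lt_div_iff₀ hx hx']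
  nlinarith

lemma not_dominates_of_lt_right (hx : 0 < x) (hx' : 0 < x') (hab : a < b) (hxx' : x < x') :
    ¬ Dominates a b x a b x' := by
  rw [dominates_iff_winWeight_lt hx hx', not_lt, winWeight, winWeight, if_neg (lt_irrefl a),
    if_neg hab.not_gt, if_pos hab, if_neg (lt_irrefl b)]
  linarith

lemma one_div_sub_one_lt_of_dominates_of_lt (hx : 0 < x) (hx' : 0 < x') (hab' : a < b')
    (hbb' : b' < b) (hd : Dominates a b x a b' x') : 1 / x - 1 < 1 / x' := by
  rw [dominates_iff_winWeight_lt hx hx', winWeight, winWeight, if_neg (lt_irrefl a),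
    if_neg hab'.not_gt, if_neg (hab'.trans hbb').not_gt, if_pos (hab'.trans hbb'), if_pos hab',
    if_pos hbb', if_neg hbb'.not_gt] at hd
  rw [div_sub_one hx.ne', div_lt_div_iff₀ hx hx']
  nlinarith

lemma one_div_add_one_lt_of_dominates_of_typeLt (hx : 0 < x) (hx' : 0 < x') (hab : a < b)
    (hlt : TypeLt a b x a b' x') (hd : Dominates a b x a b' x') : 1 / x + 1 < 1 / x' := by
  rcases hlt with haa | ⟨-, hbb'⟩ | ⟨-, rfl, hxx'⟩
  · exact absurd haa (lt_irrefl a)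
  · exact one_div_add_one_lt_of_dominates_of_lt hx hx' hab hbb' hd
  · exact absurd hd (not_dominates_of_lt_right hx hx' hab hxx')

lemma one_div_sub_one_lt_of_dominates_of_typeLt (hx : 0 < x) (hx' : 0 < x') (hab' : a < b')
    (hlt : TypeLt a b' x' a b x) (hd : Dominates a b x a b' x') : 1 / x - 1 < 1 / x' := by
  rcases hlt with haa | ⟨-, hbb'⟩ | ⟨-, rfl, hxx'⟩
  · exact absurd haa (lt_irrefl a)
  · exact one_div_sub_one_lt_of_dominates_of_lt hx hx' hab' hbb' hd
  · linarith [one_div_lt_one_div_of_lt hx' hxx']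

end Coins

section Cycles

variable {m : ℕ}

lemma Fin.sum_add_one_eq {M : Type*} [AddCommMonoid M] (f : Fin (m + 1) → M) :
    ∑ i, f (i + 1) = ∑ i, f i :=
  Equiv.sum_comp (Equiv.addRight 1) f

lemma Fin.apply_add_one_eq_of_apply_add_one_le {M : Type*} [AddCommMonoid M] [PartialOrder M]
    [IsOrderedCancelAddMonoid M] {f : Fin (m + 1) → M} (hf : ∀ i, f (i + 1) ≤ f i)
    (i : Fin (m + 1)) : f (i + 1) = f i :=
  (sum_eq_sum_iff_of_le fun i _ => hf i).1 (Fin.sum_add_one_eq f) i (mem_univ i)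

/-- Summing the increments of `φ` around the cycle gives `0 > #ascents - #descents`. -/
lemma not_isAscendingCycle_of_potential {α : Type*} [LinearOrder α] {c : Fin (m + 1) → α}
    (φ : α → ℝ) (hne : ∀ i, c i ≠ c (i + 1))
    (hasc : ∀ i, c i < c (i + 1) → φ (c i) + 1 < φ (c (i + 1)))
    (hdesc : ∀ i, c (i + 1) < c i → φ (c i) - 1 < φ (c (i + 1))) :
    ¬ IsAscendingCycle c := by
  set step : Fin (m + 1) → ℝ := fun i =>
    (if c i < c (i + 1) then 1 else 0) - (if c (i + 1) < c i then 1 else 0)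
  have hstep : ∀ i, step i < φ (c (i + 1)) - φ (c i) := by
    intro i
    rcases (hne i).lt_or_gt with h | h
    · simp only [step, if_pos h, if_neg h.not_gt]
      linarith [hasc i h]
    · simp only [step, if_pos h, if_neg h.not_gt]
      linarith [hdesc i h]
  have hsum : ∑ i, step i < 0 := by
    calc ∑ i, step i < ∑ i, (φ (c (i + 1)) - φ (c i)) :=
          sum_lt_sum_of_nonempty univ_nonempty fun i _ => hstep i
      _ = 0 := by rw [sum_sub_distrib, Fin.sum_add_one_eq (fun i => φ (c i)), sub_self]
  intro hcard
  have : (0 : ℝ) ≤ ∑ i, step i := by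
    simp only [step, sum_sub_distrib, ← natCast_card_filter, sub_nonneg]
    exact_mod_cast hcard
  linarith

end Cycles

theorem stmt10_general {n : ℕ} (a b x : Fin n → ℝ)
    (hcoin : ∀ i, a i < b i ∧ 0 < x i ∧ x i ≤ 1)
    (hlex : ∀ i j : Fin n, i < j →
      TypeLt (a i) (b i) (x i) (a j) (b j) (x j)) :
    Semiacyclic
      (fun i j : Fin n => Dominates (a i) (b i) (x i) (a j) (b j) (x j)) := by
  rintro m c ⟨-, hedge⟩
  have hab i : a i < b i := (hcoin i).1
  have hx i : 0 < x i := (hcoin i).2.1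
  have hne i : c i ≠ c (i + 1) := fun h => not_dominates_self (h ▸ hedge i)
  have ha : ∀ i, a (c (i + 1)) = a (c i) := Fin.apply_add_one_eq_of_apply_add_one_le fun i =>
    not_lt.1 fun h =>
      not_dominates_of_lt_of_le_one (hx _) (hcoin _).2.2 (hx _) (hab _).le h (hedge i)
  have hd i : Dominates (a (c i)) (b (c i)) (x (c i))
      (a (c i)) (b (c (i + 1))) (x (c (i + 1))) := by simpa only [ha i] using hedge i
  refine not_isAscendingCycle_of_potential (fun i => 1 / x i) hne (fun i h => ?_) (fun i h => ?_)
  · exact one_div_add_one_lt_of_dominates_of_typeLt (hx _) (hx _) (hab _)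
      (ha i ▸ hlex _ _ h) (hd i)
  · exact one_div_sub_one_lt_of_dominates_of_typeLt (hx _) (hx _) (ha i ▸ hab _)
      (ha i ▸ hlex _ _ h) (hd i)

/-- A set of loser and fair coins listed in increasing lexicographic order of
their types whose dominance graph is a tournament yields a semiacyclic tournament. -/
theorem stmt10 {n : ℕ} (a b x : Fin n → ℝ)
    (hcoin : ∀ i, a i < b i ∧ 0 < x i ∧ x i ≤ 1)
    (hlex : ∀ i j : Fin n, i < j →
      TypeLt (a i) (b i) (x i) (a j) (b j) (x j))
    (htour : IsTournament
      (fun i j : Fin n => Dominates (a i) (b i) (x i) (a j) (b j) (x j))) :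
    Semiacyclic
      (fun i j : Fin n => Dominates (a i) (b i) (x i) (a j) (b j) (x j)) :=
  stmt10_general a b x hcoin hlex
end

section
/- Every semiacyclic tournament T on {1, …, n} is the dominance graph of a set of n loser coins; that is, there exist coins c_1, …, c_n with types (a_i, b_i, x_i) satisfying a_i < b_i and 0 < x_i < 1 for all i, such that for all distinct i, j ∈ {1,…,n}, coin c_i dominates coin c_j if and only if i → j holds in T. -/
open Finset

/-! Give coin `i` the type `(0, i + 1, 1 / s i)`. For `i < j`, coin `i` dominates coin `j` iff
`s i + 1 < s j`, and coin `j` dominates coin `i` iff `s j < s i + 1`. So we need `s` with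
`s v - s u ≥ 1 + ε` along every ascent `u → v` and `s v - s u ≥ ε - 1` along every descent.
Such difference constraints are solved by longest-path potentials as soon as no cycle has positive
weight, and a cycle with `A` ascents and `D` descents has weight `A - D + ε (A + D)`, which is
nonpositive for `ε = 1 / (n + 1)` exactly because semiacyclicity forces `D > A`. -/

section Potential

variable {V : Type*} {R : V → V → Prop} (w : V → V → ℝ)

def pathWeight : List V → ℝ
  | u :: v :: l => w u v + pathWeight (v :: l)
  | _ => 0

@[simp] lemma pathWeight_singleton (v : V) : pathWeight w [v] = 0 := rfl

@[simp] lemma pathWeight_cons_cons (u v : V) (l : List V) :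
    pathWeight w (u :: v :: l) = w u v + pathWeight w (v :: l) := rfl

lemma pathWeight_append_cons (l₁ : List V) (v : V) (l₂ : List V) :
    pathWeight w (l₁ ++ v :: l₂) = pathWeight w (l₁ ++ [v]) + pathWeight w (v :: l₂) := by
  induction l₁ with
  | nil => simp
  | cons a l₁ ih =>
    cases l₁ with
    | nil => simp
    | cons b l₁ =>
      simp only [List.cons_append, pathWeight_cons_cons] at ih ⊢
      rw [ih, add_assoc]

lemma pathWeight_concat {l : List V} {u : V} (hu : l.getLast? = some u) (v : V) :
    pathWeight w (l ++ [v]) = pathWeight w l + w u v := by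
  obtain ⟨l', rfl⟩ := List.getLast?_eq_some_iff.mp hu
  rw [List.append_assoc, List.singleton_append, pathWeight_append_cons]
  simp

lemma pathWeight_cons_eq_sum (a : V) (l : List V) :
    pathWeight w (a :: l) =
      ∑ i : Fin l.length, w (a :: l)[(i : ℕ)] (a :: l)[(i : ℕ) + 1] := by
  induction l generalizing a with
  | nil => simp
  | cons b l ih =>
    rw [pathWeight_cons_cons, ih]
    -- `Fin (b :: l).length` is `Fin (l.length + 1)` only up to unfolding `List.length`
    erw [Fin.sum_univ_succ]
    simp

lemma getElem_length_of_getLast? {a b : V} {l : List V} (hlast : (a :: l).getLast? = some b) :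
    (a :: l)[l.length] = b := by
  simpa [List.getLast?_eq_getElem?] using hlast

lemma isCycle_getElem {a b : V} {l : List V} (hnd : (a :: l).Nodup) (hch : (a :: l).IsChain R)
    (hlast : (a :: l).getLast? = some b) (hba : R b a) :
    IsCycle R (fun i : Fin (l.length + 1) => (a :: l)[(i : ℕ)]) := by
  refine ⟨fun i j hij => Fin.ext (congrArg Fin.val (List.nodup_iff_injective_getElem.mp hnd hij)),
    fun i => ?_⟩
  induction i using Fin.lastCases with
  | last => simpa [getElem_length_of_getLast? hlast] using hba
  | cast i =>
    simp only [Fin.coeSucc_eq_succ, Fin.val_succ, Fin.val_castSucc]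
    exact List.isChain_iff_getElem.mp hch i (by simp)

lemma sum_cycle_eq_pathWeight_add {a b : V} {l : List V} (hlast : (a :: l).getLast? = some b) :
    ∑ i : Fin (l.length + 1),
        w (a :: l)[(i : ℕ)] (a :: l)[((i + 1 : Fin (l.length + 1)) : ℕ)] =
      pathWeight w (a :: l) + w b a := by
  simp [Fin.sum_univ_castSucc, pathWeight_cons_eq_sum, Fin.coeSucc_eq_succ,
    getElem_length_of_getLast? hlast]

variable (R) in
def pathWeights (v : V) : Set ℝ :=
  pathWeight w '' {l | l.Nodup ∧ l.IsChain R ∧ l.getLast? = some v}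

variable (R) in
noncomputable def pathPotential (v : V) : ℝ :=
  sSup (pathWeights R w v)

variable [Finite V]

lemma pathWeights_finite (v : V) : (pathWeights R w v).Finite :=
  ((List.finite_length_le V (Nat.card V)).subset fun _ hl => hl.1.length_le_natCard).image _

lemma pathWeight_le_pathPotential {l : List V} {v : V} (hnd : l.Nodup) (hch : l.IsChain R)
    (hlast : l.getLast? = some v) : pathWeight w l ≤ pathPotential R w v :=
  le_csSup (pathWeights_finite w v).bddAbove ⟨l, ⟨hnd, hch, hlast⟩, rfl⟩

lemma pathPotential_nonneg (v : V) : 0 ≤ pathPotential R w v :=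
  pathWeight_le_pathPotential (l := [v]) w (List.nodup_singleton v) (List.isChain_singleton v) rfl

lemma pathPotential_add_le
    (hcyc : ∀ (m : ℕ) (c : Fin (m + 1) → V), IsCycle R c →
      ∑ i, w (c i) (c (i + 1)) ≤ 0)
    {u v : V} (huv : R u v) : pathPotential R w u + w u v ≤ pathPotential R w v := by
  rw [← le_sub_iff_add_le]
  refine csSup_le ⟨_, [u], ⟨List.nodup_singleton u, List.isChain_singleton u, rfl⟩, rfl⟩ ?_
  rintro _ ⟨l, ⟨hnd, hch, hlast⟩, rfl⟩
  rw [le_sub_iff_add_le]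
  by_cases hv : v ∈ l
  -- Then the part of `l` from `v` on closes up through `u → v` to a cycle of weight `≤ 0`,
  -- so the prefix of `l` ending at `v` is at least as heavy as `l` followed by `u → v`.
  · obtain ⟨l₁, l₂, rfl⟩ := List.append_of_mem hv
    have hsuffix : (v :: l₂) <:+ l₁ ++ v :: l₂ := List.suffix_append l₁ _
    have hprefix : l₁ ++ [v] <+: l₁ ++ v :: l₂ := ⟨l₂, by simp⟩
    have hlast' : (v :: l₂).getLast? = some u := by rwa [List.getLast?_append_cons] at hlast
    have hcycle := hcyc _ _ (isCycle_getElem (hnd.sublist hsuffix.sublist) (hch.suffix hsuffix)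
      hlast' huv)
    rw [sum_cycle_eq_pathWeight_add w hlast'] at hcycle
    calc pathWeight w (l₁ ++ v :: l₂) + w u v
        = pathWeight w (l₁ ++ [v]) + (pathWeight w (v :: l₂) + w u v) := by
          rw [pathWeight_append_cons, add_assoc]
      _ ≤ pathWeight w (l₁ ++ [v]) := by linarith
      _ ≤ pathPotential R w v :=
          pathWeight_le_pathPotential w (hnd.sublist hprefix.sublist) (hch.prefix hprefix) (by simp)
  · rw [← pathWeight_concat w hlast]
    refine pathWeight_le_pathPotential w ?_ ?_ (by simp)
    · simpa using hnd.concat hv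
    · exact hch.append (List.isChain_singleton v) (by simpa [hlast])

theorem exists_potential
    (hcyc : ∀ (m : ℕ) (c : Fin (m + 1) → V), IsCycle R c →
      ∑ i, w (c i) (c (i + 1)) ≤ 0) :
    ∃ p : V → ℝ, (∀ v, 0 ≤ p v) ∧ ∀ u v, R u v → p u + w u v ≤ p v :=
  ⟨pathPotential R w, pathPotential_nonneg w, fun _ _ => pathPotential_add_le w hcyc⟩

end Potential

section Semiacyclic

variable {α : Type*} [LinearOrder α] {R : α → α → Prop} {ε : ℝ}

noncomputable def ascentWeight (ε : ℝ) (u v : α) : ℝ :=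
  if u < v then 1 + ε else ε - 1

lemma sum_ascentWeight_nonpos (hR : Semiacyclic R) {m : ℕ} {c : Fin (m + 1) → α}
    (hc : IsCycle R c) (hε : (m + 1) * ε ≤ 1) :
    ∑ i, ascentWeight ε (c i) (c (i + 1)) ≤ 0 := by
  set A := (univ.filter fun i => c i < c (i + 1)).card
  set B := (univ.filter fun i => ¬ c i < c (i + 1)).card
  have hAB : A + B = m + 1 := by
    rw [card_filter_add_card_filter_not, card_univ, Fintype.card_fin]
  have hAD : A < (univ.filter fun i => c (i + 1) < c i).card := not_le.mp (hR m c hc)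
  have hDB : (univ.filter fun i => c (i + 1) < c i).card ≤ B :=
    card_le_card (monotone_filter_right _ fun _ _ h => not_lt.mpr h.le)
  have hsum : ∑ i, ascentWeight ε (c i) (c (i + 1)) = A * (1 + ε) + B * (ε - 1) := by
    simp only [ascentWeight, sum_ite, sum_const, nsmul_eq_mul, A, B]
  have hAB_cast : (A + B : ℝ) = m + 1 := by exact_mod_cast hAB
  have hAD_cast : (A + 1 : ℝ) ≤ B := by exact_mod_cast hAD.trans_le hDB
  calc ∑ i, ascentWeight ε (c i) (c (i + 1))
      = (A + B) * ε + (A + 1 - B) - 1 := by rw [hsum]; ring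
    _ = (m + 1) * ε + (A + 1 - B) - 1 := by rw [hAB_cast]
    _ ≤ 0 := by linarith

lemma IsTournament.add_one_lt_iff (hR : IsTournament R) (hε : 0 < ε) {p : α → ℝ}
    (hp : ∀ u v, R u v → p u + ascentWeight ε u v ≤ p v) {i j : α} (hij : i < j) :
    (p i + 1 < p j ↔ R i j) ∧ (p j < p i + 1 ↔ R j i) := by
  have hasc : R i j → p i + 1 < p j := fun h => by
    have := hp i j h
    simp only [ascentWeight, if_pos hij] at this
    linarith
  have hdesc : R j i → p j < p i + 1 := fun h => by
    have := hp j i h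
    simp only [ascentWeight, if_neg hij.not_gt] at this
    linarith
  have hRij := hR.2 i j hij.ne
  constructor
  · exact ⟨fun h => hRij.mpr fun h' => (hdesc h').not_gt h, hasc⟩
  · exact ⟨fun h => by_contra fun h' => (hasc (hRij.mpr h')).not_gt h, hdesc⟩

end Semiacyclic

lemma winProb_of_lt {b b' x x' : ℝ} (hb : 0 < b) (hbb : b < b') :
    winProb 0 b x 0 b' x' = x / (1 + x) * (1 / (1 + x')) := by
  simp [winProb, hb, hbb.not_gt, (hb.trans hbb).not_gt]

lemma winProb_of_gt {b b' x x' : ℝ} (hb : 0 < b') (hbb : b' < b) (hx' : 0 ≤ x') :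
    winProb 0 b x 0 b' x' = x / (1 + x) := by
  have : 1 + x' ≠ 0 := by positivity
  simp [winProb, hbb, hb.trans hbb, hb.not_gt]
  field_simp

lemma dominates_iff_of_lt {b b' s s' : ℝ} (hb : 0 < b) (hbb : b < b') (hs : 0 < s)
    (hs' : 0 < s') :
    Dominates 0 b s⁻¹ 0 b' s'⁻¹ ↔ s + 1 < s' := by
  rw [Dominates, winProb_of_lt hb hbb, winProb_of_gt hb hbb (by positivity)]
  rw [← sub_pos]
  field_simp
  constructor <;> intro h <;> nlinarith

lemma dominates_iff_of_gt {b b' s s' : ℝ} (hb : 0 < b') (hbb : b' < b) (hs : 0 < s)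
    (hs' : 0 < s') :
    Dominates 0 b s⁻¹ 0 b' s'⁻¹ ↔ s < s' + 1 := by
  rw [Dominates, winProb_of_lt hb hbb, winProb_of_gt hb hbb (by positivity)]
  rw [← sub_pos]
  field_simp
  constructor <;> intro h <;> nlinarith

/-- Every semiacyclic tournament is the dominance graph of a set of loser coins. -/
theorem stmt11 {n : ℕ} (R : Fin n → Fin n → Prop)
    (htour : IsTournament R) (hsemi : Semiacyclic R) :
    ∃ a b x : Fin n → ℝ,
      (∀ i, a i < b i ∧ 0 < x i ∧ x i < 1) ∧
      ∀ i j : Fin n, i ≠ j →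
        (Dominates (a i) (b i) (x i) (a j) (b j) (x j) ↔ R i j) := by
  set ε : ℝ := 1 / (n + 1)
  have hε : 0 < ε := by positivity
  obtain ⟨p, hp0, hp⟩ := exists_potential (R := R) (ascentWeight ε) fun m c hc => by
    have hm : m + 1 ≤ n := by simpa using Fintype.card_le_of_injective c hc.1
    refine sum_ascentWeight_nonpos hsemi hc ?_
    rw [mul_one_div, div_le_one (by positivity)]
    exact_mod_cast hm.trans n.le_succ
  have hpos : ∀ k, 0 < p k + 2 := fun k => by linarith [hp0 k]
  refine ⟨fun _ => 0, fun i => ((i : ℕ) : ℝ) + 1, fun i => (p i + 2)⁻¹,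
    fun i => ⟨by positivity, inv_pos.mpr (hpos i),
      inv_lt_one_of_one_lt₀ (by linarith [hp0 i])⟩,
    fun i j hij => ?_⟩
  rcases hij.lt_or_gt with h | h
  · rw [dominates_iff_of_lt (by positivity) (by simpa using h) (hpos i) (hpos j), add_right_comm,
      add_lt_add_iff_right]
    exact (htour.add_one_lt_iff hε hp h).1
  · rw [dominates_iff_of_gt (by positivity) (by simpa using h) (hpos i) (hpos j),
      add_right_comm _ 2, add_lt_add_iff_right]
    exact (htour.add_one_lt_iff hε hp h).2
end
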